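/- arXiv:1402.4355 — 5 statements merged into one kernel-verified Lean document; each statement's English description precedes it below -/
import Mathlib

section
/- Let l be a filter on a type α and let μ, p, E : α → ℝ be functions such that, eventually along l, μ(s) ≥ 0, μ(s) + 3·p(s) ≥ 0 and μ(s) + p(s) > 0. If the slope function s ↦ ((2/3)·μ(s) + E(s)) / (E(s) − μ(s)/3 − p(s)) tends to 1 along l, then the function s ↦ |E(s)| / (μ(s) + p(s)) tends to +∞ along l. -/
/-!
With `D = E - μ/3 - p`, the slope minus one is `(μ + p)/D`, so a slope tending to `1` forces
`|D|/(μ + p) → ∞`. The strong energy condition gives `0 ≤ μ/3 + p ≤ μ + p`, hence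
`|E| ≥ |D| - (μ + p)`, and `|E|/(μ + p)` diverges as well.
-/

open Filter Topology

section Limits

variable {α : Type*} {l : Filter α}

theorem eventually_ne_zero_of_tendsto_div_one {N D : α → ℝ}
    (h : Tendsto (fun s => N s / D s) l (𝓝 1)) : ∀ᶠ s in l, D s ≠ 0 := by
  filter_upwards [h.eventually_ne one_ne_zero] with s hs hD
  simp [hD] at hs

theorem tendsto_sub_div_nhds_zero_of_tendsto_div_one {N D : α → ℝ}
    (h : Tendsto (fun s => N s / D s) l (𝓝 1)) :
    Tendsto (fun s => (N s - D s) / D s) l (𝓝 0) := by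
  have hsub : Tendsto (fun s => N s / D s - 1) l (𝓝 0) := by
    simpa using h.sub_const 1
  refine hsub.congr' ?_
  filter_upwards [eventually_ne_zero_of_tendsto_div_one h] with s hD
  rw [sub_div, div_self hD]

theorem tendsto_abs_div_atTop_of_tendsto_div_nhds_zero {f g : α → ℝ}
    (hf : ∀ᶠ s in l, 0 < f s) (hg : ∀ᶠ s in l, g s ≠ 0)
    (h : Tendsto (fun s => f s / g s) l (𝓝 0)) :
    Tendsto (fun s => |g s| / f s) l atTop := by
  have hpos : ∀ᶠ s in l, |f s / g s| ∈ Set.Ioi 0 := by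
    filter_upwards [hf, hg] with s hfs hgs
    exact abs_pos.mpr (div_ne_zero hfs.ne' hgs)
  have habs : Tendsto (fun s => |f s / g s|) l (𝓝[>] 0) :=
    tendsto_nhdsWithin_of_tendsto_nhds_of_eventually_within _ (by simpa using h.abs) hpos
  refine habs.inv_tendsto_nhdsGT_zero.congr' ?_
  filter_upwards [hf] with s hfs
  simp only [Pi.inv_apply, abs_div, abs_of_pos hfs, inv_div]

end Limits

theorem abs_sub_sub_le_abs_add {μ p E : ℝ} (hμ : 0 ≤ μ) (hsec : 0 ≤ μ + 3 * p) :
    |E - μ / 3 - p| ≤ |E| + (μ + p) := by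
  rw [abs_le]
  constructor <;> linarith [le_abs_self E, neg_abs_le E]

/-- Analytic core of Proposition 4: if, eventually along `l`, the strong energy
condition holds (`μ ≥ 0`, `μ + 3p ≥ 0`) and `μ + p > 0`, and the slope of the
apparent horizon `((2/3)μ + E)/(E − μ/3 − p)` tends to `1` along `l`, then
`|E|/(μ + p)` tends to `+∞` along `l`. -/
theorem slope_one_implies_weyl_ratio_diverges
    {α : Type*} (l : Filter α) (μ p E : α → ℝ)
    (h1 : ∀ᶠ s in l, 0 ≤ μ s)
    (h2 : ∀ᶠ s in l, 0 ≤ μ s + 3 * p s)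
    (h3 : ∀ᶠ s in l, 0 < μ s + p s)
    (hslope : Tendsto (fun s => ((2/3) * μ s + E s) / (E s - μ s / 3 - p s)) l (nhds 1)) :
    Tendsto (fun s => |E s| / (μ s + p s)) l atTop := by
  have hD : ∀ᶠ s in l, E s - μ s / 3 - p s ≠ 0 := eventually_ne_zero_of_tendsto_div_one hslope
  have hzero : Tendsto (fun s => (μ s + p s) / (E s - μ s / 3 - p s)) l (𝓝 0) := by
    convert tendsto_sub_div_nhds_zero_of_tendsto_div_one hslope using 3
    ring
  have hDiv : Tendsto (fun s => |E s - μ s / 3 - p s| / (μ s + p s)) l atTop :=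
    tendsto_abs_div_atTop_of_tendsto_div_nhds_zero h3 hD hzero
  refine tendsto_atTop_mono' l ?_ (tendsto_atTop_add_const_right l (-1) hDiv)
  filter_upwards [h1, h2, h3] with s hμ hsec hpos
  have hbound : |E s - μ s / 3 - p s| / (μ s + p s) ≤ |E s| / (μ s + p s) + 1 := by
    rw [div_le_iff₀ hpos, add_mul, div_mul_cancel₀ _ hpos.ne', one_mul]
    exact abs_sub_sub_le_abs_add hμ hsec
  linarith
end

section
/- Let μ, p : ℝ satisfy μ ≥ 0, μ + 3p ≥ 0 and μ + p > 0. Then ((2/3)·μ)/(−μ/3 − p) < 1. Equivalently (contrapositive form of the Corollary): if μ ≥ 0, μ + 3p ≥ 0 and ((2/3)·μ)/(−μ/3 − p) ≥ 1, then μ + p ≤ 0. -/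
theorem conformallyFlat_slope_nonpos {μ p : ℝ} (hμ : 0 ≤ μ) (hsec : 0 ≤ μ + 3 * p) :
    ((2/3) * μ) / (-(μ / 3) - p) ≤ 0 :=
  div_nonpos_of_nonneg_of_nonpos (by positivity) (by linarith)

/-- Algebraic core of Corollary 1: for a conformally flat perfect fluid the
horizon slope is `(2μ/3)/(−μ/3 − p)`; under the strong energy condition with
`μ + p > 0` this slope is `< 1`, and equivalently (contrapositive form) if the
slope is `≥ 1` then `μ + p ≤ 0`. -/
theorem conformally_flat_slope_lt_one :
    (∀ μ p : ℝ, 0 ≤ μ → 0 ≤ μ + 3 * p → 0 < μ + p →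
      ((2/3) * μ) / (-(μ / 3) - p) < 1) ∧
    (∀ μ p : ℝ, 0 ≤ μ → 0 ≤ μ + 3 * p →
      1 ≤ ((2/3) * μ) / (-(μ / 3) - p) → μ + p ≤ 0) := by
  refine ⟨fun μ p hμ hsec _ => ?_, fun μ p hμ hsec hslope => ?_⟩
  · linarith [conformallyFlat_slope_nonpos hμ hsec]
  · linarith [conformallyFlat_slope_nonpos hμ hsec]
end

section
/- Let M₀ > 0 and M₂ < 0 be real numbers, and define M(r) = M₀ + M₂·r² and t_h(r) = 2/(3·√(M(r))) − (2/3)·r³·M(r). Then there exists δ > 0 such that for all r with 0 < r < δ, one has M(r) > 0 and t_h(r) > 2/(3·√M₀). -/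
/-! By convexity of `x ↦ 1 / √x`, the singularity time `2 / (3 √M(r))` of the shell `r` exceeds
the central one `2 / (3 √M₀)` by at least `-M₂ r² / (3 M₀ √M₀)`, which is of order `r²`,
whereas the shell is trapped only `(2/3) r³ M(r)` before its own singularity, which is of
order `r³`. -/

open Filter Topology

/-- Tangent-line bound for the convex function `x ↦ 1 / √x` at `x = u ^ 2`. -/
theorem inv_add_sq_sub_sq_div_le_inv {u v : ℝ} (hu : 0 < u) (hv : 0 < v) :
    u⁻¹ + (u ^ 2 - v ^ 2) / (2 * u ^ 3) ≤ v⁻¹ := by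
  have hgap : v⁻¹ - (u⁻¹ + (u ^ 2 - v ^ 2) / (2 * u ^ 3))
      = (u - v) ^ 2 * (2 * u + v) / (2 * u ^ 3 * v) := by
    field_simp
    ring
  have : 0 ≤ (u - v) ^ 2 * (2 * u + v) / (2 * u ^ 3 * v) := by positivity
  linarith

theorem inv_sqrt_add_sub_div_le_inv_sqrt {a b : ℝ} (ha : 0 < a) (hb : 0 < b) :
    (√a)⁻¹ + (a - b) / (2 * a * √a) ≤ (√b)⁻¹ := by
  have h := inv_add_sq_sub_sq_div_le_inv (Real.sqrt_pos.mpr ha) (Real.sqrt_pos.mpr hb)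
  rwa [Real.sq_sqrt ha.le, Real.sq_sqrt hb.le, pow_succ, Real.sq_sqrt ha.le, ← mul_assoc] at h

theorem singularity_time_lt_horizon_time {M₀ M₂ r : ℝ} (hM₀ : 0 < M₀) (hr : 0 < r)
    (hM : 0 < M₀ + M₂ * r ^ 2) (hsmall : 2 * M₀ ^ 2 * √M₀ * r < -M₂) :
    2 / (3 * √M₀) < 2 / (3 * √(M₀ + M₂ * r ^ 2)) - (2 / 3) * r ^ 3 * (M₀ + M₂ * r ^ 2) := by
  have hs₀ : 0 < √M₀ := Real.sqrt_pos.mpr hM₀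
  have hM₂ : M₂ < 0 := by nlinarith [mul_pos (mul_pos (pow_pos hM₀ 2) hs₀) hr]
  have htangent := inv_sqrt_add_sub_div_le_inv_sqrt hM₀ hM
  have hgain : r ^ 3 * (M₀ + M₂ * r ^ 2) < (M₀ - (M₀ + M₂ * r ^ 2)) / (2 * M₀ * √M₀) := by
    rw [lt_div_iff₀ (by positivity)]
    nlinarith [mul_lt_mul_of_pos_left hsmall (pow_pos hr 2), pow_pos hr 5,
      mul_pos (mul_pos hM₀ hs₀) (pow_pos hr 5)]
  have hdiv : ∀ x : ℝ, 2 / (3 * x) = (2 / 3) * x⁻¹ := fun x => by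
    rw [← div_div, div_eq_mul_inv]
  rw [hdiv, hdiv]
  linarith

/-- LTB collapse with `M(r) = M₀ + M₂r²` and `M₂ < 0`: near the centre, shells
become trapped only after the central singularity time `2/(3√M₀)`, so the
central singularity is locally naked. -/
theorem ltb_naked_singularity (M₀ M₂ : ℝ) (hM₀ : 0 < M₀) (hM₂ : M₂ < 0) :
    ∃ δ > 0, ∀ r : ℝ, 0 < r → r < δ →
      0 < M₀ + M₂ * r ^ 2 ∧
      2 / (3 * Real.sqrt (M₀ + M₂ * r ^ 2)) - (2/3) * r ^ 3 * (M₀ + M₂ * r ^ 2)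
        > 2 / (3 * Real.sqrt M₀) := by
  have hpos : ∀ᶠ r in 𝓝 (0 : ℝ), 0 < M₀ + M₂ * r ^ 2 :=
    continuousAt_const.eventually_lt (by fun_prop) (by simpa using hM₀)
  have hsmall : ∀ᶠ r in 𝓝 (0 : ℝ), 2 * M₀ ^ 2 * √M₀ * r < -M₂ :=
    (by fun_prop : ContinuousAt (fun r : ℝ => 2 * M₀ ^ 2 * √M₀ * r) 0).eventually_lt
      continuousAt_const (by simpa using hM₂)
  obtain ⟨δ, hδ, hball⟩ := Metric.eventually_nhds_iff.mp (hpos.and hsmall)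
  refine ⟨δ, hδ, fun r hr hrδ => ?_⟩
  obtain ⟨hM, hr_small⟩ := hball (y := r) (by rwa [Real.dist_0_eq_abs, abs_of_pos hr])
  exact ⟨hM, singularity_time_lt_horizon_time hM₀ hr hM hr_small⟩
end

section
/- Let M₀ > 0 and M₂ < 0 be real numbers. Define M(r) = M₀ + M₂·r², F(r) = r³·M(r), t_h(r) = 2/(3·√(M(r))) − (2/3)·r³·M(r), and R(ρ,t) = ρ·(1 − (3/2)·√(M(ρ))·t)^(2/3). Then the function r ↦ 1 − (deriv F r) / (deriv (fun ρ => R(ρ, t_h(r))) r) tends to 1 as r tends to 0 from the right (i.e. along the filter 𝓝[>] 0). -/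
/-!
At the horizon time the collapse factor is a perfect cube, `1 - (3/2)√M(r) t_h(r) = (r√M(r))³`,
so the `2/3` power can be taken exactly and `R′ = r²M - M′ t_h / (2M)`. For `M = M₀ + M₂r²`
both `F′ = r(3M₀r + 5M₂r³)` and `R′ = r(rM - M₂ t_h / M)` carry a factor `r`. After cancelling
it, the numerator tends to `0` while the denominator tends to `-2M₂ / (3M₀^{3/2}) ≠ 0`, so
`F′/R′ → 0`.
-/

open Filter Topology

noncomputable abbrev horizonTime (M : ℝ → ℝ) (r : ℝ) : ℝ :=
  2 / (3 * √(M r)) - 2 / 3 * r ^ 3 * M r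

theorem one_sub_mul_horizonTime {M : ℝ → ℝ} {r : ℝ} (hMr : 0 < M r) :
    1 - 3 / 2 * √(M r) * horizonTime M r = (r * √(M r)) ^ 3 := by
  have hs : √(M r) ≠ 0 := (Real.sqrt_pos.mpr hMr).ne'
  have hsq : √(M r) ^ 2 = M r := Real.sq_sqrt hMr.le
  rw [horizonTime]
  generalize √(M r) = s at hs hsq
  rw [← hsq]
  field_simp
  ring

theorem hasDerivAt_areaRadius_horizonTime {M : ℝ → ℝ} {M' r : ℝ} (hM : HasDerivAt M M' r)
    (hr : 0 < r) (hMr : 0 < M r) :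
    HasDerivAt (fun ρ => ρ * (1 - 3 / 2 * √(M ρ) * horizonTime M r) ^ (2 / 3 : ℝ))
      (r ^ 2 * M r - M' * horizonTime M r / (2 * M r)) r := by
  set t := horizonTime M r
  have hv : 0 < r * √(M r) := mul_pos hr (Real.sqrt_pos.mpr hMr)
  have hbase : 1 - 3 / 2 * √(M r) * t = (r * √(M r)) ^ 3 := one_sub_mul_horizonTime hMr
  have hpow : ∀ p : ℝ, ((r * √(M r)) ^ 3) ^ p = (r * √(M r)) ^ (3 * p) := fun p => by
    rw [← Real.rpow_natCast, ← Real.rpow_mul hv.le]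
    norm_num
  have hinner := (((hM.sqrt hMr.ne').const_mul (3 / 2 : ℝ)).mul_const t).const_sub 1
  refine ((hasDerivAt_id' r).mul (hinner.rpow_const (p := 2 / 3) (Or.inl (by
    rw [hbase]; positivity)))).congr_deriv ?_
  rw [hbase, hpow, hpow]
  norm_num [Real.rpow_neg_one]
  field_simp
  linear_combination (2 * r ^ 2 * M r * √(M r) ^ 2 + M' * t) * Real.sq_sqrt hMr.le

theorem tendsto_horizon_slope_ratio {M₀ M₂ : ℝ} (hM₀ : 0 < M₀) (hM₂ : M₂ ≠ 0) :
    Tendsto (fun r => (3 * M₀ * r + 5 * M₂ * r ^ 3) /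
        (r * (M₀ + M₂ * r ^ 2) - M₂ * horizonTime (fun ρ => M₀ + M₂ * ρ ^ 2) r /
          (M₀ + M₂ * r ^ 2)))
      (𝓝 0) (𝓝 0) := by
  have hsqrt : 3 * √(M₀ + M₂ * 0 ^ 2) ≠ 0 := by simp [hM₀.ne', hM₀.le]
  have hM : M₀ + M₂ * 0 ^ 2 ≠ 0 := by simp [hM₀.ne']
  have hden : 0 * (M₀ + M₂ * 0 ^ 2) - M₂ * horizonTime (fun ρ => M₀ + M₂ * ρ ^ 2) 0 /
      (M₀ + M₂ * 0 ^ 2) ≠ 0 := by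
    simp [horizonTime, hM₀.ne', hM₀.le, hM₂]
  have hcont : ContinuousAt (fun r => (3 * M₀ * r + 5 * M₂ * r ^ 3) /
      (r * (M₀ + M₂ * r ^ 2) - M₂ * horizonTime (fun ρ => M₀ + M₂ * ρ ^ 2) r /
        (M₀ + M₂ * r ^ 2))) 0 := by
    fun_prop (disch := assumption)
  simpa using hcont.tendsto

/-- LTB collapse with `M(r) = M₀ + M₂r²`, `M₂ < 0`: the slope of the tangent to
the apparent horizon at the central singularity, `1 − F′/R′` evaluated along the
apparent-horizon time `t_h(r)`, tends to `1` as `r → 0⁺` (marginally naked). -/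
theorem ltb_horizon_slope_limit (M₀ M₂ : ℝ) (hM₀ : 0 < M₀) (hM₂ : M₂ < 0) :
    Tendsto (fun r : ℝ =>
        1 - deriv (fun ρ : ℝ => ρ ^ 3 * (M₀ + M₂ * ρ ^ 2)) r /
          deriv (fun ρ : ℝ => ρ * (1 - (3/2) * Real.sqrt (M₀ + M₂ * ρ ^ 2) *
            (2 / (3 * Real.sqrt (M₀ + M₂ * r ^ 2)) - (2/3) * r ^ 3 * (M₀ + M₂ * r ^ 2)))
              ^ ((2:ℝ)/3)) r)
      (nhdsWithin 0 (Set.Ioi 0)) (nhds 1) := by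
  have hM : ∀ r : ℝ, HasDerivAt (fun ρ => M₀ + M₂ * ρ ^ 2) (2 * M₂ * r) r := fun r => by
    simpa [mul_comm, mul_left_comm] using ((hasDerivAt_pow 2 r).const_mul M₂).const_add M₀
  have hMpos : ∀ᶠ r in 𝓝[>] (0 : ℝ), 0 < M₀ + M₂ * r ^ 2 := by
    have h : Tendsto (fun r : ℝ => M₀ + M₂ * r ^ 2) (𝓝 0) (𝓝 M₀) := by
      simpa using (hM 0).continuousAt.tendsto
    exact nhdsWithin_le_nhds (h.eventually (eventually_gt_nhds hM₀))
  have hlim := ((tendsto_horizon_slope_ratio hM₀ hM₂.ne).mono_left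
    (nhdsWithin_le_nhds (s := Set.Ioi 0))).const_sub 1
  rw [sub_zero] at hlim
  refine hlim.congr' ?_
  filter_upwards [self_mem_nhdsWithin, hMpos] with r (hr : 0 < r) hMr
  have hF : HasDerivAt (fun ρ => ρ ^ 3 * (M₀ + M₂ * ρ ^ 2))
      (r * (3 * M₀ * r + 5 * M₂ * r ^ 3)) r :=
    ((hasDerivAt_pow 3 r).mul (hM r)).congr_deriv (by ring)
  rw [hF.deriv, (hasDerivAt_areaRadius_horizonTime (hM r) hr hMr).deriv]
  field_simp
end

section
/- Let M₀ > 0 and M₂ be real numbers. Define M(r) = M₀ + M₂·r², F(r) = r³·M(r), and R(ρ,t) = ρ·(1 − (3/2)·√(M(ρ))·t)^(2/3). Then for every fixed t with 0 < t < 2/(3·√M₀), the function r ↦ 1 − (deriv F r) / (deriv (fun ρ => R(ρ, t)) r) tends to 1 as r tends to 0 from the right (i.e. along the filter 𝓝[>] 0). -/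
/-!
Before the singularity time the collapse factor `1 - (3/2)√M₀ t` is positive and `M(0) = M₀ > 0`,
so `F` and `R(·, t)` are `C¹` near the centre and `1 - F′/R′` is continuous at `r = 0`. There
`F′(0) = 0`, because `F` vanishes to third order, while `R′(0) = (1 - (3/2)√M₀ t)^(2/3) ≠ 0`.
-/

open Filter Topology

section

variable {𝕜 : Type*} [NontriviallyNormedField 𝕜]

theorem ContDiffAt.continuousAt_deriv {F : Type*} [NormedAddCommGroup F] [NormedSpace 𝕜 F]
    {f : 𝕜 → F} {x : 𝕜} {n : WithTop ℕ∞} (hf : ContDiffAt 𝕜 n f x) (hn : n ≠ 0) :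
    ContinuousAt (deriv f) x :=
  (hf.continuousAt_fderiv hn).clm_apply continuousAt_const

theorem deriv_id_mul_zero {g : 𝕜 → 𝕜} (hg : DifferentiableAt 𝕜 g 0) :
    deriv (fun x => x * g x) 0 = g 0 :=
  ((hasDerivAt_id' 0).mul hg.hasDerivAt).deriv.trans (by simp)

theorem deriv_pow_mul_zero {g : 𝕜 → 𝕜} {n : ℕ} (hn : 1 < n) (hg : DifferentiableAt 𝕜 g 0) :
    deriv (fun x => x ^ n * g x) 0 = 0 :=
  ((hasDerivAt_pow n 0).mul hg.hasDerivAt).deriv.trans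
    (by simp [zero_pow (by omega : n ≠ 0), zero_pow (by omega : n - 1 ≠ 0)])

theorem tendsto_one_sub_deriv_div_deriv {f g : 𝕜 → 𝕜} {x : 𝕜} (hf : ContDiffAt 𝕜 1 f x)
    (hg : ContDiffAt 𝕜 1 g x) (hf' : deriv f x = 0) (hg' : deriv g x ≠ 0) :
    Tendsto (fun r => 1 - deriv f r / deriv g r) (𝓝 x) (𝓝 1) := by
  have h := (hf.continuousAt_deriv one_ne_zero).tendsto.div
    (hg.continuousAt_deriv one_ne_zero).tendsto hg'
  rw [hf', zero_div] at h
  simpa using (tendsto_const_nhds (x := (1 : 𝕜))).sub h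

end

theorem contDiffAt_ltb_collapseFactor {M₀ M₂ t : ℝ} {n : WithTop ℕ∞} (hM₀ : 0 < M₀)
    (ht : 0 < 1 - (3/2) * Real.sqrt M₀ * t) :
    ContDiffAt ℝ n (fun ρ : ℝ => (1 - (3/2) * Real.sqrt (M₀ + M₂ * ρ ^ 2) * t) ^ ((2:ℝ)/3)) 0 := by
  have hM : ContDiffAt ℝ n (fun ρ : ℝ => M₀ + M₂ * ρ ^ 2) 0 := by fun_prop
  refine ContDiffAt.rpow_const_of_ne ?_ (by simpa using ht.ne')
  exact contDiffAt_const.sub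
    ((contDiffAt_const.mul (hM.sqrt (by simpa using hM₀.ne'))).mul contDiffAt_const)

/-- LTB collapse with `M(r) = M₀ + M₂r²`: for every fixed time `t` before the
central singularity time `2/(3√M₀)`, the quantity `1 − F′/R′` tends to `1` as
`r → 0⁺` (inner limit of the iterated-limit slope computation). -/
theorem ltb_inner_limit (M₀ M₂ : ℝ) (hM₀ : 0 < M₀) :
    ∀ t : ℝ, 0 < t → t < 2 / (3 * Real.sqrt M₀) →
      Tendsto (fun r : ℝ =>
          1 - deriv (fun ρ : ℝ => ρ ^ 3 * (M₀ + M₂ * ρ ^ 2)) r /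
            deriv (fun ρ : ℝ => ρ * (1 - (3/2) * Real.sqrt (M₀ + M₂ * ρ ^ 2) * t)
              ^ ((2:ℝ)/3)) r)
        (nhdsWithin 0 (Set.Ioi 0)) (nhds 1) := by
  intro t _ ht
  have hfactor : 0 < 1 - (3/2) * Real.sqrt M₀ * t := by
    rw [lt_div_iff₀ (by positivity)] at ht
    linarith
  have hR := contDiffAt_ltb_collapseFactor (M₂ := M₂) (n := 1) hM₀ hfactor
  refine (tendsto_one_sub_deriv_div_deriv (by fun_prop) (by fun_prop) ?_ ?_).mono_left
    nhdsWithin_le_nhds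
  · exact deriv_pow_mul_zero (by norm_num) (by fun_prop)
  · rw [deriv_id_mul_zero (hR.differentiableAt one_ne_zero)]
    simpa using (Real.rpow_pos_of_pos hfactor _).ne'
end
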